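/- If a contraction R ε-stabilizes a density operator ρ (i.e., Re Tr(Rρ) ≥ 1 − ε), then for any contraction S, |Re Tr(SRρ) − Re Tr(Sρ)| ≤ O(√ε). -/

import Mathlib

open Matrix ComplexOrder

/-- A matrix is a contraction if `RᴴR ⪯ I`, i.e. its operator norm is at most `1`. -/
def IsContraction {n : ℕ} (R : Matrix (Fin n) (Fin n) ℂ) : Prop :=
  ((1 : Matrix (Fin n) (Fin n) ℂ) - Rᴴ * R).PosSemidef

/-!
A density matrix `ρ` induces the semi-inner product `⟪X, Y⟫ = Tr(Y ρ Xᴴ)` on matrices. In it,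
`Tr(SRρ) − Tr(Sρ) = ⟪1, S(R − 1)⟫`, so by Cauchy–Schwarz its size is at most
`‖1‖ ‖S(R − 1)‖ ≤ ‖R − 1‖`: indeed `‖1‖² = Tr ρ = 1`, and left multiplication by a contraction
does not increase the seminorm. Finally `‖R − 1‖² = ‖R‖² − 2 Re Tr(Rρ) + 1 ≤ 2 − 2(1 − ε) = 2ε`.
-/

namespace Matrix

variable {𝕜 n : Type*} [RCLike 𝕜] [Fintype n]

open scoped MatrixOrder in
theorem PosSemidef.trace_mul_nonneg {A B : Matrix n n 𝕜} (hA : A.PosSemidef)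
    (hB : B.PosSemidef) : 0 ≤ (A * B).trace := by
  classical
  obtain ⟨C, rfl⟩ := CStarAlgebra.nonneg_iff_eq_star_mul_self.mp hA.nonneg
  rw [star_eq_conjTranspose, mul_assoc, trace_mul_comm]
  exact (hB.mul_mul_conjTranspose_same C).trace_nonneg

theorem PosSemidef.norm_trace_mul_mul_conjTranspose_le {ρ : Matrix n n 𝕜} (hρ : ρ.PosSemidef)
    (X Y : Matrix n n 𝕜) :
    ‖(Y * ρ * Xᴴ).trace‖ ≤
      √(RCLike.re (X * ρ * Xᴴ).trace) * √(RCLike.re (Y * ρ * Yᴴ).trace) := by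
  let := ρ.toMatrixSeminormedAddCommGroup hρ
  let := ρ.toMatrixInnerProductSpace hρ
  have h := norm_inner_le_norm (𝕜 := 𝕜) X Y
  rwa [norm_eq_sqrt_re_inner (𝕜 := 𝕜) X, norm_eq_sqrt_re_inner (𝕜 := 𝕜) Y] at h

variable [DecidableEq n]

theorem re_trace_mul_mul_conjTranspose_le {S P : Matrix n n 𝕜} (hS : (1 - Sᴴ * S).PosSemidef)
    (hP : P.PosSemidef) : RCLike.re (S * P * Sᴴ).trace ≤ RCLike.re P.trace := by
  have h := (RCLike.nonneg_iff.mp (hS.trace_mul_nonneg hP)).1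
  rwa [sub_mul, one_mul, trace_sub, map_sub, sub_nonneg, mul_assoc, trace_mul_comm] at h

theorem re_trace_sub_one_mul_mul_conjTranspose_le {R ρ : Matrix n n 𝕜}
    (hR : (1 - Rᴴ * R).PosSemidef) (hρ : ρ.PosSemidef) :
    RCLike.re ((R - 1) * ρ * (R - 1)ᴴ).trace ≤
      2 * (RCLike.re ρ.trace - RCLike.re (R * ρ).trace) := by
  have hcross : RCLike.re (ρ * Rᴴ).trace = RCLike.re (R * ρ).trace := by
    rw [← hρ.isHermitian.eq, ← conjTranspose_mul, trace_conjTranspose, RCLike.star_def,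
      RCLike.conj_re, hρ.isHermitian.eq]
  have hexpand : (R - 1) * ρ * (R - 1)ᴴ = R * ρ * Rᴴ - R * ρ - ρ * Rᴴ + ρ := by
    simp only [conjTranspose_sub, conjTranspose_one]
    noncomm_ring
  rw [hexpand, trace_add, trace_sub, trace_sub, map_add, map_sub, map_sub, hcross]
  linarith [re_trace_mul_mul_conjTranspose_le hR hρ]

theorem re_trace_mul_sub_one_mul_mul_conjTranspose_le {R S ρ : Matrix n n 𝕜}
    (hR : (1 - Rᴴ * R).PosSemidef) (hS : (1 - Sᴴ * S).PosSemidef) (hρ : ρ.PosSemidef) :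
    RCLike.re (S * (R - 1) * ρ * (S * (R - 1))ᴴ).trace ≤
      2 * (RCLike.re ρ.trace - RCLike.re (R * ρ).trace) :=
  calc RCLike.re (S * (R - 1) * ρ * (S * (R - 1))ᴴ).trace
      = RCLike.re (S * ((R - 1) * ρ * (R - 1)ᴴ) * Sᴴ).trace := by
        simp only [conjTranspose_mul, mul_assoc]
    _ ≤ RCLike.re ((R - 1) * ρ * (R - 1)ᴴ).trace :=
        re_trace_mul_mul_conjTranspose_le hS (hρ.mul_mul_conjTranspose_same (R - 1))
    _ ≤ 2 * (RCLike.re ρ.trace - RCLike.re (R * ρ).trace) :=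
        re_trace_sub_one_mul_mul_conjTranspose_le hR hρ

end Matrix

/-- If a contraction `R` ε-stabilizes a density operator `ρ`, then for any contraction
`S`, `|Re Tr(SRρ) − Re Tr(Sρ)| ≤ O(√ε)`. -/
theorem stabilizer_insertion :
    ∃ C : ℝ, 0 < C ∧
      ∀ (n : ℕ) (R S ρ : Matrix (Fin n) (Fin n) ℂ) (ε : ℝ),
        IsContraction R → IsContraction S →
        ρ.PosSemidef → ρ.trace = 1 → 0 ≤ ε →
        1 - ε ≤ ((R * ρ).trace).re →
        |((S * R * ρ).trace).re - ((S * ρ).trace).re| ≤ C * Real.sqrt ε := by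
  refine ⟨√2, by positivity, fun n R S ρ ε hR hS hρ hρ1 _ hstab => ?_⟩
  have hdiff : (S * R * ρ).trace - (S * ρ).trace = (S * (R - 1) * ρ * 1ᴴ).trace := by
    rw [conjTranspose_one, mul_one, ← trace_sub, mul_sub, mul_one, sub_mul]
  have hnorm_one : RCLike.re (1 * ρ * 1ᴴ).trace = 1 := by
    rw [one_mul, conjTranspose_one, mul_one, hρ1, RCLike.one_re]
  have hdev : RCLike.re (S * (R - 1) * ρ * (S * (R - 1))ᴴ).trace ≤ 2 * ε := by
    have h := re_trace_mul_sub_one_mul_mul_conjTranspose_le hR hS hρ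
    rw [hρ1, RCLike.one_re] at h
    simp only [RCLike.re_to_complex] at h ⊢
    linarith
  calc |((S * R * ρ).trace).re - ((S * ρ).trace).re|
      ≤ ‖(S * (R - 1) * ρ * 1ᴴ).trace‖ := by
        rw [← hdiff, ← Complex.sub_re]; exact Complex.abs_re_le_norm _
    _ ≤ √(RCLike.re (1 * ρ * 1ᴴ).trace) *
          √(RCLike.re (S * (R - 1) * ρ * (S * (R - 1))ᴴ).trace) :=
        hρ.norm_trace_mul_mul_conjTranspose_le 1 _
    _ ≤ √(2 * ε) := by rw [hnorm_one, Real.sqrt_one, one_mul]; exact Real.sqrt_le_sqrt hdev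
    _ = √2 * √ε := Real.sqrt_mul zero_le_two ε
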